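/- arXiv:2207.05335 — 4 statements merged into one kernel-verified Lean document; each statement's English description precedes it below -/
import Mathlib

section
/- For a tree T₁ ∘ T₂ obtained by leaf substitution, every vertex v of T₁ (viewed as a subtree of T₁ ∘ T₂) has root label ω_V^∘(v) = ω_{V1}(v) ∘ ω_{V2}(t₂), where t₂ is the root of T₂; in particular ev(T₁ ∘ T₂) = ev(T₁) ∘ ev(T₂). -/
/-- A decorated rooted tree with edge labels in `A`: a root together with a list of
(edge label, child subtree) pairs.  The single-vertex tree (a leaf) is `node []`. -/
inductive DTree (A : Type*) where
  | node : List (A × DTree A) → DTree A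

namespace DTree

/-- Addition of decorated rooted trees: identify the two roots, keeping all edge labels. -/
def tadd {A : Type*} : DTree A → DTree A → DTree A
  | node l, node m => node (l ++ m)

/-- Multiplication of decorated rooted trees: replace each leaf of the first tree
by a copy of the second tree, retaining all edge labels. -/
def tcomp {A : Type*} : DTree A → DTree A → DTree A
  | node cs, t2 =>
    if cs.isEmpty then t2
    else node (cs.attach.map fun p => (p.1.1, tcomp p.1.2 t2))
  termination_by t _ => sizeOf t
  decreasing_by
    obtain ⟨⟨a, t⟩, hp⟩ := p
    have := List.sizeOf_lt_of_mem hp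
    simp only [Prod.mk.sizeOf_spec] at this
    simp only [node.sizeOf_spec]
    omega

/-- The recursively defined label of the root (`ev`): a leaf is labelled by the
identity map, a non-leaf vertex by the pointwise union, over its children, of the
edge label composed with the child vertex label. -/
def ev {X : Type*} : DTree (Set X → Set X) → Set X → Set X
  | node cs => fun Y =>
    if cs.isEmpty then Y
    else ⋃ p ∈ cs.attach, p.1.1 (ev p.1.2 Y)
  termination_by t => sizeOf t
  decreasing_by
    obtain ⟨⟨a, t⟩, hp⟩ := p
    have := List.sizeOf_lt_of_mem hp
    simp only [Prod.mk.sizeOf_spec] at this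
    simp only [node.sizeOf_spec]
    omega

/-- All edge labels of the tree lie in `A'` (the tree is `A'`-decorated). -/
inductive LabelsIn {A : Type*} (A' : Set A) : DTree A → Prop
  | node (cs : List (A × DTree A)) (h1 : ∀ p ∈ cs, p.1 ∈ A')
      (h2 : ∀ p ∈ cs, LabelsIn A' p.2) : LabelsIn A' (node cs)

end DTree

/-- `Subtree s t`: `s` is the subtree of `t` rooted at some vertex of `t`. -/
inductive Subtree {A : Type*} : DTree A → DTree A → Prop
  | refl (t : DTree A) : Subtree t t
  | child {s : DTree A} (cs : List (A × DTree A)) (p : A × DTree A)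
      (hp : p ∈ cs) (h : Subtree s p.2) : Subtree s (DTree.node cs)

theorem ev_tcomp {X : Type*} : ∀ (S T₂ : DTree (Set X → Set X)),
    DTree.ev (DTree.tcomp S T₂) = DTree.ev S ∘ DTree.ev T₂
  | DTree.node cs, T₂ => by
    rw [DTree.tcomp]
    by_cases h : cs.isEmpty
    · rw [if_pos h]
      funext Y
      rw [DTree.ev]
      simp [h]
    · rw [if_neg h]
      funext Y
      rw [DTree.ev]
      rw [show (DTree.ev (DTree.node cs) ∘ DTree.ev T₂) Y
            = DTree.ev (DTree.node cs) (DTree.ev T₂ Y) from rfl, DTree.ev]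
      have h2 : ((cs.attach.map fun p => (p.1.1, DTree.tcomp p.1.2 T₂)).isEmpty) = false := by
        cases cs
        · exact absurd rfl h
        · simp [List.attach_cons]
      simp only [h2, Bool.false_eq_true, if_false, h, if_neg]
      ext x
      simp only [Set.mem_iUnion, List.mem_attach, exists_true_left, List.mem_map,
        Subtype.exists, exists_prop]
      constructor
      · rintro ⟨a, ⟨⟨b, s⟩, hbs, -, rfl⟩, -, hx⟩
        exact ⟨(b, s), hbs, trivial, by rwa [ev_tcomp s T₂] at hx⟩
      · rintro ⟨⟨b, s⟩, hbs, -, hx⟩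
        exact ⟨(b, s.tcomp T₂), ⟨(b, s), hbs, trivial, rfl⟩, trivial,
          by rw [ev_tcomp s T₂]; exact hx⟩
  termination_by S _ => sizeOf S
  decreasing_by
    all_goals
      have := List.sizeOf_lt_of_mem hbs
      simp only [Prod.mk.sizeOf_spec] at this
      simp only [DTree.node.sizeOf_spec]
      omega

theorem stmt_10 {X : Type*} [Fintype X] (T₁ T₂ : DTree (Set X → Set X)) :
    (∀ S : DTree (Set X → Set X), Subtree S T₁ →
      DTree.ev (DTree.tcomp S T₂) = DTree.ev S ∘ DTree.ev T₂) ∧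
    DTree.ev (DTree.tcomp T₁ T₂) = DTree.ev T₁ ∘ DTree.ev T₂ :=
  ⟨fun S _ => ev_tcomp S T₂, ev_tcomp T₁ T₂⟩
end

section
/- If a chemical x ∈ X_F satisfies the food-generation condition (F) witnessed by reaction sets R₁,…,Rₙ, then the associated F-tree T^R(x) satisfies x ∈ ev(T^R(x))(∅); i.e., there is an element φ of the extended semigroup model S^R with x ∈ φ(∅). -/
open Classical in
/-- The function `φ_r` of a reaction with reactants `dm`, products `rn`, and food set `F`. -/
noncomputable def phiR {X : Type*} (dm rn F : Set X) : Set X → Set X :=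
  fun Y => if dm ⊆ Y ∪ F then rn \ F else ∅

/-- The extended semigroup model `S^R` of a CRS: the closure of the generators
`φ_r` and the zero map under composition and pointwise union. -/
inductive SR {X R : Type*} (dm rn : R → Set X) (F : Set X) : (Set X → Set X) → Prop
  | zero : SR dm rn F (fun _ => ∅)
  | gen (r : R) : SR dm rn F (phiR (dm r) (rn r) F)
  | comp {φ ψ} : SR dm rn F φ → SR dm rn F ψ → SR dm rn F (φ ∘ ψ)
  | add {φ ψ} : SR dm rn F φ → SR dm rn F ψ → SR dm rn F (fun Y => φ Y ∪ ψ Y)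

/-- The root labels `Ψ_i = ev(T_i^R)` of the F-trees:
`Ψ₀ = Σ_{r ∈ Rs 0} φ_r` and `Ψ_{i+1} = Σ_{r ∈ ∪_{j ≤ i+1} Rs j} φ_r ∘ Ψ_i`
(indices here are 0-based). -/
noncomputable def Psi {X R : Type*} (dm rn : R → Set X) (F : Set X)
    (Rs : ℕ → Set R) : ℕ → Set X → Set X
  | 0 => fun Y => ⋃ r ∈ Rs 0, phiR (dm r) (rn r) F Y
  | (i + 1) => fun Y =>
      ⋃ r ∈ ⋃ j ∈ Finset.range (i + 2), Rs j,
        phiR (dm r) (rn r) F (Psi dm rn F Rs i Y)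

/-!
By induction on `m`, every product of a reaction in `R₀ ∪ ⋯ ∪ R_m` lies in `Ψ_m(∅) ∪ F`:
condition (F) makes the reactants of such a reaction food or products of earlier stages,
so its `φ_r` fires on `Ψ_{m-1}(∅)`. Each `Ψ_m` is built from the generators `φ_r` by finite
sums and compositions, hence lies in `S^R`.
-/

section

variable {X R : Type*} (dm rn : R → Set X) (F : Set X)

lemma phiR_of_subset {dm rn F Y : Set X} (h : dm ⊆ Y ∪ F) :
    phiR dm rn F Y = rn \ F :=
  if_pos h

lemma SR.biUnion_phiR {S : Set R} (hS : S.Finite) :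
    SR dm rn F (fun Y => ⋃ r ∈ S, phiR (dm r) (rn r) F Y) := by
  induction S, hS using Set.Finite.induction_on with
  | empty => simpa using SR.zero
  | @insert r S _ _ ih =>
    simpa only [Set.biUnion_insert] using SR.add (SR.gen r) ih

lemma SR.Psi [Finite R] (Rs : ℕ → Set R) : ∀ i, SR dm rn F (Psi dm rn F Rs i)
  | 0 => SR.biUnion_phiR dm rn F (Set.toFinite _)
  | i + 1 => SR.comp (SR.biUnion_phiR dm rn F (Set.toFinite _)) (SR.Psi Rs i)

lemma rn_subset_biUnion_phiR_union {S : Set R} {Y : Set X} {r : R} (hr : r ∈ S)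
    (h : dm r ⊆ Y ∪ F) : rn r ⊆ (⋃ r ∈ S, phiR (dm r) (rn r) F Y) ∪ F := by
  intro y hy
  by_cases hyF : y ∈ F
  · exact Or.inr hyF
  · exact Or.inl (Set.mem_biUnion hr (by rw [phiR_of_subset h]; exact ⟨hy, hyF⟩))

lemma rn_subset_Psi_union (Rs : ℕ → Set R) (hF1 : ∀ r ∈ Rs 0, dm r ⊆ F) (m : ℕ)
    (hF2 : ∀ i < m, ∀ r ∈ Rs (i + 1),
      dm r ⊆ (⋃ j ∈ Finset.range (i + 1), ⋃ r' ∈ Rs j, rn r') ∪ F) :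
    ∀ j ≤ m, ∀ r ∈ Rs j, rn r ⊆ Psi dm rn F Rs m ∅ ∪ F := by
  induction m with
  | zero =>
    rintro _ hj r hr
    obtain rfl := Nat.le_zero.mp hj
    exact rn_subset_biUnion_phiR_union dm rn F hr (by simpa using hF1 r hr)
  | succ m ih =>
    have hprev := ih fun i hi => hF2 i (by omega)
    intro j hj r hr
    have hdm : dm r ⊆ Psi dm rn F Rs m ∅ ∪ F := by
      rcases j with _ | k
      · exact (hF1 r hr).trans Set.subset_union_right
      · refine (hF2 k (by omega) r hr).trans (Set.union_subset ?_ Set.subset_union_right)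
        simp only [Set.iUnion₂_subset_iff, Finset.mem_range]
        exact fun j' hj' r' hr' => hprev j' (by omega) r' hr'
    exact rn_subset_biUnion_phiR_union dm rn F
      (Set.mem_iUnion₂.mpr ⟨j, Finset.mem_range.mpr (by omega), hr⟩) hdm

end

theorem stmt_11_general {X R : Type*} [Fintype R]
    (dm rn : R → Set X) (F : Set X) (Rs : ℕ → Set R) (n : ℕ)
    (x : X) (hx : x ∉ F)
    (hF1 : ∀ r ∈ Rs 0, dm r ⊆ F)
    (hF2 : ∀ i, i + 1 < n → ∀ r ∈ Rs (i + 1),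
      dm r ⊆ (⋃ j ∈ Finset.range (i + 1), ⋃ r' ∈ Rs j, rn r') ∪ F)
    (hF3 : x ∈ ⋃ r ∈ Rs (n - 1), rn r) :
    x ∈ Psi dm rn F Rs (n - 1) ∅ ∧
    ∃ φ : Set X → Set X, SR dm rn F φ ∧ x ∈ φ ∅ := by
  obtain ⟨r, hr, hxr⟩ := Set.mem_iUnion₂.mp hF3
  have hxPsi : x ∈ Psi dm rn F Rs (n - 1) ∅ :=
    (rn_subset_Psi_union dm rn F Rs hF1 (n - 1) (fun i hi => hF2 i (by omega))
      (n - 1) le_rfl r hr hxr).resolve_right hx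
  exact ⟨hxPsi, _, SR.Psi dm rn F Rs (n - 1), hxPsi⟩

theorem stmt_11 {X R : Type*} [Fintype X] [Fintype R]
    (dm rn : R → Set X) (F : Set X) (Rs : ℕ → Set R) (n : ℕ) (hn : 0 < n)
    (x : X) (hx : x ∉ F)
    (hF1 : ∀ r ∈ Rs 0, dm r ⊆ F)
    (hF2 : ∀ i, i + 1 < n → ∀ r ∈ Rs (i + 1),
      dm r ⊆ (⋃ j ∈ Finset.range (i + 1), ⋃ r' ∈ Rs j, rn r') ∪ F)
    (hF3 : x ∈ ⋃ r ∈ Rs (n - 1), rn r) :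
    x ∈ Psi dm rn F Rs (n - 1) ∅ ∧
    ∃ φ : Set X → Set X, SR dm rn F φ ∧ x ∈ φ ∅ :=
  stmt_11_general dm rn F Rs n x hx hF1 hF2 hF3
end

section
/- If condition (F) holds for x with reaction sets R₁,…,Rₙ, then for all 1 ≤ i ≤ n, ∪_{j=1}^i ran(R_j) ⊆ Ψ_i(∅) ∪ F, where Ψ₁ = Σ_{r∈R₁} φ_r and Ψ_{i+1} = Σ_{r ∈ ∪_{j≤i+1} R_j} φ_r ∘ Ψ_i. -/
theorem stmt_12 {X R : Type*} [Fintype X] [Fintype R]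
    (dm rn : R → Set X) (F : Set X) (Rs : ℕ → Set R) (n : ℕ) (hn : 0 < n)
    (hF1 : ∀ r ∈ Rs 0, dm r ⊆ F)
    (hF2 : ∀ i, i + 1 < n → ∀ r ∈ Rs (i + 1),
      dm r ⊆ (⋃ j ∈ Finset.range (i + 1), ⋃ r' ∈ Rs j, rn r') ∪ F) :
    ∀ i < n, (⋃ j ∈ Finset.range (i + 1), ⋃ r ∈ Rs j, rn r)
      ⊆ Psi dm rn F Rs i ∅ ∪ F := by
  intro i
  induction i with
  | zero =>
    intro _ x hx
    simp only [Set.mem_iUnion, Finset.mem_range] at hx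
    obtain ⟨j, hj, r, hr, hxr⟩ := hx
    interval_cases j
    by_cases hxF : x ∈ F
    · exact Or.inr hxF
    · left
      show x ∈ ⋃ r ∈ Rs 0, phiR (dm r) (rn r) F ∅
      refine Set.mem_biUnion hr ?_
      simp [phiR, Set.empty_union, hF1 r hr, hxr, hxF]
  | succ i ih =>
    intro hlt x hx
    have hin : i < n := Nat.lt_of_succ_lt hlt
    have IH := ih hin
    simp only [Set.mem_iUnion, Finset.mem_range] at hx
    obtain ⟨j, hj, r, hr, hxr⟩ := hx
    by_cases hxF : x ∈ F
    · exact Or.inr hxF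
    left
    show x ∈ ⋃ r ∈ ⋃ j ∈ Finset.range (i + 2), Rs j,
        phiR (dm r) (rn r) F (Psi dm rn F Rs i ∅)
    have hrmem : r ∈ ⋃ j ∈ Finset.range (i + 2), Rs j := by
      exact Set.mem_biUnion (Finset.mem_range.mpr hj) hr
    refine Set.mem_biUnion hrmem ?_
    have hsub : dm r ⊆ Psi dm rn F Rs i ∅ ∪ F := by
      match j, hj with
      | 0, _ => intro y hy; exact Or.inr (hF1 r hr hy)
      | (k + 1), hk =>
        have hki : k + 1 ≤ i + 1 := Nat.lt_succ_iff.mp hk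
        have hkn : k + 1 < n := lt_of_le_of_lt hki hlt
        intro y hy
        rcases hF2 k hkn r hr hy with h | h
        · refine IH ?_
          simp only [Set.mem_iUnion, Finset.mem_range] at h ⊢
          obtain ⟨j', hj', r', hr', hy'⟩ := h
          exact ⟨j', lt_of_lt_of_le hj' hki, r', hr', hy'⟩
        · exact Or.inr h
    simp [phiR, hsub, hxr, hxF]
end

section
/- If the composition semigroup (S, ∘) of the semigroup model of a CRS is nilpotent (some power of every element, equivalently some fixed power of the whole semigroup, is the zero map), then there is no nonempty set X'_F ⊆ X_F with X'_F ⊆ Φ_{X'_F}(∅); i.e., the CRS has no nontrivial RAF sets of chemicals. -/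
theorem stmt_18 {V : Type*} [Fintype V]
    (S : Set (Set V → Set V)) (hfin : S.Finite)
    (hmonoS : ∀ φ ∈ S, Monotone φ)
    (hzero : (fun _ : Set V => (∅ : Set V)) ∈ S)
    (hcomp : ∀ φ ∈ S, ∀ ψ ∈ S, φ ∘ ψ ∈ S)
    (hadd : ∀ φ ∈ S, ∀ ψ ∈ S, (fun Y => φ Y ∪ ψ Y) ∈ S)
    (hnil : ∃ n : ℕ, 0 < n ∧ ∀ φ ∈ S, φ^[n] = fun _ : Set V => (∅ : Set V))
    (Phi : Set V → (Set V → Set V)) (hPhi : ∀ Y : Set V, Phi Y ∈ S) :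
    ¬ ∃ X'F : Set V, X'F.Nonempty ∧ X'F ⊆ Phi X'F ∅ := by
  rintro ⟨X, hne, hsub⟩
  obtain ⟨n, hn, hnil⟩ := hnil
  set φ := Phi X with hφ
  have hmono : Monotone φ := hmonoS _ (hPhi X)
  have key : ∀ k : ℕ, φ^[k] ∅ ⊆ φ^[k+1] ∅ := by
    intro k
    induction k with
    | zero => simp
    | succ k ih =>
      rw [Function.iterate_succ_apply', Function.iterate_succ_apply']
      exact hmono ih
  have grow : ∀ k : ℕ, φ ∅ ⊆ φ^[k+1] ∅ := by
    intro k
    induction k with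
    | zero => simp
    | succ k ih => exact ih.trans (key (k+1))
  obtain ⟨m, rfl⟩ := Nat.exists_eq_succ_of_ne_zero hn.ne'
  have : X ⊆ φ^[m+1] ∅ := hsub.trans (grow m)
  rw [hnil φ (hPhi X)] at this
  exact hne.ne_empty (Set.subset_empty_iff.mp this)
end
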